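/- Let G ∈ ℝ^{n×n} be a symmetric matrix and set Z = G_wd G_wd^T. Then the second moment of the quadratic form x^T G x under the product Bernoulli distribution with mean vector y is E_y[(x^T G x)^2] = Tr(G)^2 + 2 Tr(G) (y^T G_wd y) + 2 Tr(Z) + 4 y^T Z_wd y + Σ_{(i,j,k,l) pairwise distinct} y_i y_j y_k y_l G_{ij} G_{kl}. -/
import Mathlib


open Finset Matrix

/-- Expectation `E_y[g]` of `g : {−1,1}^n → ℝ` under the product Bernoulli distribution in
which the coordinates are independent with `P(x_i = 1) = (1 + y_i)/2` and
`P(x_i = −1) = (1 − y_i)/2`, so that `E_y[x_i] = y_i`. -/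
noncomputable def berE (n : ℕ) (y : Fin n → ℝ) (g : (Fin n → ℝ) → ℝ) : ℝ :=
  ∑ σ : Fin n → Bool,
    g (fun i => if σ i then 1 else -1) *
      ∏ i, (if σ i then (1 + y i) / 2 else (1 - y i) / 2)

/-- `M` with its diagonal entries set to zero. -/
def wd {n : ℕ} (M : Matrix (Fin n) (Fin n) ℝ) : Matrix (Fin n) (Fin n) ℝ :=
  M - Matrix.diagonal fun i => M i i

lemma berE_prod (n : ℕ) (y : Fin n → ℝ) (f : Fin n → ℝ → ℝ) :
    berE n y (fun x => ∏ i, f i (x i))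
      = ∏ i, ((1 + y i) / 2 * f i 1 + (1 - y i) / 2 * f i (-1)) := by
  unfold berE
  have : ∀ i, ((1 + y i) / 2 * f i 1 + (1 - y i) / 2 * f i (-1))
      = ∑ b : Bool, f i (if b then 1 else -1) * (if b then (1 + y i) / 2 else (1 - y i) / 2) := by
    intro i; simp [Fintype.sum_bool]; ring
  simp_rw [this]
  rw [Finset.prod_univ_sum (fun _ => (univ : Finset Bool))]
  refine Finset.sum_congr rfl fun σ _ => ?_
  rw [Finset.prod_mul_distrib]

lemma berE_finset_prod (n : ℕ) (y : Fin n → ℝ) (s : Finset (Fin n)) :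
    berE n y (fun x => ∏ m ∈ s, x m) = ∏ m ∈ s, y m := by
  have h : ∀ x : Fin n → ℝ, (∏ m ∈ s, x m) = ∏ m, (if m ∈ s then x m else 1) := by
    intro x
    rw [Finset.prod_ite_mem, Finset.univ_inter]
  calc berE n y (fun x => ∏ m ∈ s, x m)
      = berE n y (fun x => ∏ m, (if m ∈ s then x m else 1)) := by simp_rw [h]
    _ = ∏ m, ((1 + y m) / 2 * (if m ∈ s then 1 else 1) + (1 - y m) / 2 * (if m ∈ s then (-1:ℝ) else 1)) :=
        berE_prod n y (fun m t => if m ∈ s then t else 1)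
    _ = ∏ m, (if m ∈ s then y m else 1) := by
        refine Finset.prod_congr rfl fun m _ => ?_
        by_cases hm : m ∈ s <;> simp [hm] <;> ring
    _ = ∏ m ∈ s, y m := by rw [Finset.prod_ite_mem, Finset.univ_inter]

lemma berE_congr (n : ℕ) (y : Fin n → ℝ) (g g' : (Fin n → ℝ) → ℝ)
    (h : ∀ σ : Fin n → Bool, g (fun i => if σ i then 1 else -1)
        = g' (fun i => if σ i then 1 else -1)) : berE n y g = berE n y g' := by
  unfold berE; exact Finset.sum_congr rfl fun σ _ => by rw [h σ]

lemma eps_sq (b : Bool) : ((if b then (1:ℝ) else -1) * (if b then 1 else -1)) = 1 := by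
  cases b <;> norm_num

lemma berE_four (n : ℕ) (y : Fin n → ℝ) (i j k l : Fin n) :
    berE n y (fun x => x i * x j * x k * x l) =
      if i = j then (if k = l then 1 else y k * y l)
      else if k = l then y i * y j
      else if (i = k ∧ j = l) ∨ (i = l ∧ j = k) then 1
      else if i = k then y j * y l
      else if i = l then y j * y k
      else if j = k then y i * y l
      else if j = l then y i * y k
      else y i * y j * y k * y l := by
  have key : ∀ s : Finset (Fin n), (∀ σ : Fin n → Bool,
      ((if σ i then (1:ℝ) else -1) * (if σ j then 1 else -1) * (if σ k then 1 else -1) * (if σ l then 1 else -1))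
        = ∏ m ∈ s, (if σ m then (1:ℝ) else -1)) →
      berE n y (fun x => x i * x j * x k * x l) = ∏ m ∈ s, y m := by
    intro s hs
    rw [berE_congr n y _ (fun x => ∏ m ∈ s, x m) (fun σ => hs σ), berE_finset_prod]
  rcases eq_or_ne i j with hij | hij
  · rcases eq_or_ne k l with hkl | hkl
    · rw [if_pos hij, if_pos hkl,
        key ∅ fun σ => by rw [hij, hkl]; cases σ j <;> cases σ l <;> norm_num]
      simp
    · rw [if_pos hij, if_neg hkl,
        key {k, l} fun σ => by
          rw [hij, Finset.prod_pair hkl]; cases σ j <;> cases σ k <;> cases σ l <;> norm_num,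
        Finset.prod_pair hkl]
  · rcases eq_or_ne k l with hkl | hkl
    · rw [if_neg hij, if_pos hkl,
        key {i, j} fun σ => by
          rw [hkl, Finset.prod_pair hij]; cases σ i <;> cases σ j <;> cases σ l <;> norm_num,
        Finset.prod_pair hij]
    · by_cases hc : (i = k ∧ j = l) ∨ (i = l ∧ j = k)
      · rw [if_neg hij, if_neg hkl, if_pos hc]
        rcases hc with ⟨h1, h2⟩ | ⟨h1, h2⟩
        · rw [key ∅ fun σ => by rw [h1, h2]; cases σ k <;> cases σ l <;> norm_num]; simp
        · rw [key ∅ fun σ => by rw [h1, h2]; cases σ k <;> cases σ l <;> norm_num]; simp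
      · rw [if_neg hij, if_neg hkl, if_neg hc]
        rcases eq_or_ne i k with hik | hik
        · have hjl : j ≠ l := fun h => hc (Or.inl ⟨hik, h⟩)
          rw [if_pos hik,
            key {j, l} fun σ => by
              rw [hik, Finset.prod_pair hjl]; cases σ k <;> cases σ j <;> cases σ l <;> norm_num,
            Finset.prod_pair hjl]
        · rw [if_neg hik]
          rcases eq_or_ne i l with hil | hil
          · have hjk : j ≠ k := fun h => hc (Or.inr ⟨hil, h⟩)
            rw [if_pos hil,
              key {j, k} fun σ => by
                rw [hil, Finset.prod_pair hjk]; cases σ l <;> cases σ j <;> cases σ k <;> norm_num,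
              Finset.prod_pair hjk]
          · rw [if_neg hil]
            rcases eq_or_ne j k with hjk | hjk
            · rw [if_pos hjk,
                key {i, l} fun σ => by
                  rw [hjk, Finset.prod_pair hil]; cases σ i <;> cases σ k <;> cases σ l <;> norm_num,
                Finset.prod_pair hil]
            · rw [if_neg hjk]
              rcases eq_or_ne j l with hjl | hjl
              · rw [if_pos hjl,
                  key {i, k} fun σ => by
                    rw [hjl, Finset.prod_pair hik]; cases σ i <;> cases σ l <;> cases σ k <;> norm_num,
                  Finset.prod_pair hik]
              · rw [if_neg hjl]
                have h1 : i ∉ ({j, k, l} : Finset (Fin n)) := by simp [hij, hik, hil]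
                have h2 : j ∉ ({k, l} : Finset (Fin n)) := by simp [hjk, hjl]
                have hset : ∀ f : Fin n → ℝ, ∏ m ∈ ({i, j, k, l} : Finset (Fin n)), f m
                    = f i * f j * f k * f l := by
                  intro f
                  rw [show ({i, j, k, l} : Finset (Fin n)) = insert i {j, k, l} from rfl,
                    Finset.prod_insert h1,
                    show ({j, k, l} : Finset (Fin n)) = insert j {k, l} from rfl,
                    Finset.prod_insert h2, Finset.prod_pair hkl]
                  ring
                rw [key {i, j, k, l} fun σ => by rw [hset], hset]

lemma berE_expand (n : ℕ) (y : Fin n → ℝ) (G : Matrix (Fin n) (Fin n) ℝ) :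
    berE n y (fun x => (x ⬝ᵥ G.mulVec x) ^ 2)
      = ∑ i, ∑ j, ∑ k, ∑ l, G i j * G k l * berE n y (fun x => x i * x j * x k * x l) := by
  have hq : ∀ x : Fin n → ℝ, (x ⬝ᵥ G.mulVec x) ^ 2
      = ∑ i, ∑ j, ∑ k, ∑ l, G i j * G k l * (x i * x j * x k * x l) := by
    intro x
    have h1 : x ⬝ᵥ G.mulVec x = ∑ i, ∑ j, x i * (G i j * x j) := by
      simp [dotProduct, Matrix.mulVec, Finset.mul_sum]
    rw [sq, h1]
    simp_rw [Finset.sum_mul, Finset.mul_sum]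
    refine Finset.sum_congr rfl fun i _ => Finset.sum_congr rfl fun j _ =>
      Finset.sum_congr rfl fun k _ => Finset.sum_congr rfl fun l _ => by ring
  unfold berE
  simp_rw [hq, Finset.sum_mul]
  rw [Finset.sum_comm]
  refine Finset.sum_congr rfl fun i _ => ?_
  rw [Finset.sum_comm]
  refine Finset.sum_congr rfl fun j _ => ?_
  rw [Finset.sum_comm]
  refine Finset.sum_congr rfl fun k _ => ?_
  rw [Finset.sum_comm]
  refine Finset.sum_congr rfl fun l _ => ?_
  simp_rw [mul_assoc, ← Finset.mul_sum]


section Aux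
variable {n : ℕ} (G : Matrix (Fin n) (Fin n) ℝ) (y : Fin n → ℝ)

lemma wd_apply {n : ℕ} (M : Matrix (Fin n) (Fin n) ℝ) (a b : Fin n) :
    wd M a b = if a = b then 0 else M a b := by
  simp only [wd, Matrix.sub_apply, Matrix.diagonal_apply]
  split_ifs with h
  · subst h; ring
  · ring

lemma sum4_factor {n : ℕ} (A B : Fin n → Fin n → ℝ) :
    ∑ i, ∑ j, ∑ k, ∑ l, A i j * B k l = (∑ i, ∑ j, A i j) * (∑ k, ∑ l, B k l) := by
  simp_rw [Finset.sum_mul, Finset.mul_sum]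

lemma trace_eval : (∑ i, ∑ j, (if i = j then G i j else 0)) = G.trace := by
  simp [Finset.sum_ite_eq, Matrix.trace, Matrix.diag]

lemma quad_eval : (∑ k, ∑ l, (if k ≠ l then G k l * (y k * y l) else 0))
    = y ⬝ᵥ (wd G).mulVec y := by
  simp only [dotProduct, Matrix.mulVec, wd_apply]
  refine Finset.sum_congr rfl fun k _ => ?_
  rw [Finset.mul_sum]
  refine Finset.sum_congr rfl fun l _ => ?_
  by_cases h : k = l <;> simp [h, dotProduct] <;> ring

lemma P1 : ∑ i, ∑ j, ∑ k, ∑ l, (if i = j ∧ k = l then G i j * G k l else 0)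
    = G.trace ^ 2 := by
  have : ∀ i j k l : Fin n, (if i = j ∧ k = l then G i j * G k l else 0)
      = (if i = j then G i j else 0) * (if k = l then G k l else 0) := by
    intro i j k l; by_cases h1 : i = j <;> by_cases h2 : k = l <;> simp [h1, h2]
  simp_rw [this]
  rw [sum4_factor, trace_eval, sq]

lemma P2 : ∑ i, ∑ j, ∑ k, ∑ l, (if i = j ∧ k ≠ l then G i j * G k l * (y k * y l) else 0)
    = G.trace * (y ⬝ᵥ (wd G).mulVec y) := by
  have : ∀ i j k l : Fin n, (if i = j ∧ k ≠ l then G i j * G k l * (y k * y l) else 0)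
      = (if i = j then G i j else 0) * (if k ≠ l then G k l * (y k * y l) else 0) := by
    intro i j k l; by_cases h1 : i = j <;> by_cases h2 : k = l <;> simp [h1, h2] <;> ring
  simp_rw [this]
  rw [sum4_factor, trace_eval, quad_eval]

lemma P3 : ∑ i, ∑ j, ∑ k, ∑ l, (if i ≠ j ∧ k = l then G i j * G k l * (y i * y j) else 0)
    = G.trace * (y ⬝ᵥ (wd G).mulVec y) := by
  have : ∀ i j k l : Fin n, (if i ≠ j ∧ k = l then G i j * G k l * (y i * y j) else 0)
      = (if i ≠ j then G i j * (y i * y j) else 0) * (if k = l then G k l else 0) := by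
    intro i j k l; by_cases h1 : i = j <;> by_cases h2 : k = l <;> simp [h1, h2] <;> ring
  simp_rw [this]
  rw [sum4_factor, trace_eval, quad_eval, mul_comm]

lemma P4 (hG : G.IsSymm) :
    ∑ i, ∑ j, ∑ k, ∑ l, (if i ≠ j ∧ k ≠ l ∧ ((i = k ∧ j = l) ∨ (i = l ∧ j = k)) then G i j * G k l else 0)
    = 2 * (wd G * (wd G)ᵀ).trace := by
  have hsym : ∀ a b, G a b = G b a := fun a b => hG.apply b a
  have split : ∀ i j k l : Fin n,
      (if i ≠ j ∧ k ≠ l ∧ ((i = k ∧ j = l) ∨ (i = l ∧ j = k)) then G i j * G k l else 0)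
      = (if j = l then (if i = k then (if i ≠ j then G i j * G k l else 0) else 0) else 0)
      + (if j = k then (if i = l then (if i ≠ j then G i j * G k l else 0) else 0) else 0) := by
    intro i j k l
    by_cases h1 : i = j <;> by_cases h2 : i = k <;> by_cases h3 : i = l <;>
      by_cases h4 : j = k <;> by_cases h5 : j = l <;> by_cases h6 : k = l <;>
      simp_all <;> first | ring | tauto
  simp_rw [split, Finset.sum_add_distrib]
  have c1 : ∀ (F : Fin n → Fin n → Fin n → Fin n → ℝ) (hF : ∀ i j k l, F i j k l =
      (if j = l then (if i = k then (if i ≠ j then G i j * G k l else 0) else 0) else 0)),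
      True := fun _ _ => trivial
  have e1 : (∑ i, ∑ j, ∑ k, ∑ l, (if j = l then (if i = k then (if i ≠ j then G i j * G k l else 0) else 0) else 0))
      = ∑ i, ∑ j, (if i ≠ j then G i j * G i j else 0) := by
    refine Finset.sum_congr rfl fun i _ => Finset.sum_congr rfl fun j _ => ?_
    simp [Finset.sum_ite_eq]
  have e2 : (∑ i, ∑ j, ∑ k, ∑ l, (if j = k then (if i = l then (if i ≠ j then G i j * G k l else 0) else 0) else 0))
      = ∑ i, ∑ j, (if i ≠ j then G i j * G j i else 0) := by
    refine Finset.sum_congr rfl fun i _ => Finset.sum_congr rfl fun j _ => ?_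
    simp [Finset.sum_ite_eq]
  rw [e1, e2]
  have tr : (wd G * (wd G)ᵀ).trace = ∑ i, ∑ j, (if i ≠ j then G i j * G i j else 0) := by
    simp only [Matrix.trace, Matrix.diag, Matrix.mul_apply, Matrix.transpose_apply, wd_apply]
    refine Finset.sum_congr rfl fun i _ => Finset.sum_congr rfl fun j _ => ?_
    by_cases h : i = j <;> simp [h]
  rw [tr]
  have : ∀ i j : Fin n, (if i ≠ j then G i j * G j i else 0) = (if i ≠ j then G i j * G i j else 0) := by
    intro i j; by_cases h : i = j <;> simp [h, hsym i j]
  simp_rw [this]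
  ring

lemma quadZ : y ⬝ᵥ (wd (wd G * (wd G)ᵀ)).mulVec y
    = ∑ a, ∑ b, ∑ m, (if a ≠ b ∧ a ≠ m ∧ b ≠ m then y a * y b * G a m * G b m else 0) := by
  simp only [dotProduct, Matrix.mulVec, wd_apply, Matrix.mul_apply, Matrix.transpose_apply]
  refine Finset.sum_congr rfl fun a _ => ?_
  rw [Finset.mul_sum]
  refine Finset.sum_congr rfl fun b _ => ?_
  by_cases hab : a = b
  · simp [hab, dotProduct]
  · simp only [if_neg hab, dotProduct]
    rw [Finset.sum_mul, Finset.mul_sum]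
    refine Finset.sum_congr rfl fun m _ => ?_
    by_cases ham : a = m <;> by_cases hbm : b = m <;> simp [ham, hbm, hab] <;> ring

lemma collapse3 {n : ℕ} (F : Fin n → ℝ) (i : Fin n) :
    ∑ k : Fin n, ∑ l : Fin n, (if i = k then F l else 0) = ∑ l, F l := by
  rw [Finset.sum_comm]
  refine Finset.sum_congr rfl fun l _ => ?_
  simp [Finset.sum_ite_eq]

lemma P5 (hG : G.IsSymm) :
    ∑ i, ∑ j, ∑ k, ∑ l, (if i ≠ j ∧ k ≠ l ∧ i = k ∧ j ≠ l then G i j * G k l * (y j * y l) else 0)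
    = y ⬝ᵥ (wd (wd G * (wd G)ᵀ)).mulVec y := by
  have hsym : ∀ a b, G a b = G b a := fun a b => hG.apply b a
  have split : ∀ i j k l : Fin n,
      (if i ≠ j ∧ k ≠ l ∧ i = k ∧ j ≠ l then G i j * G k l * (y j * y l) else 0)
      = (if i = k then (if j ≠ l ∧ i ≠ j ∧ i ≠ l then G i j * G i l * (y j * y l) else 0) else 0) := by
    intro i j k l
    by_cases h2 : i = k
    · subst h2
      by_cases a : i = j <;> by_cases b : i = l <;> by_cases c : j = l <;>
        simp [a, b, c, eq_comm]
    · simp [h2]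
  simp_rw [split, collapse3]
  rw [quadZ G y, Finset.sum_comm]
  refine Finset.sum_congr rfl fun j _ => ?_
  rw [Finset.sum_comm]
  refine Finset.sum_congr rfl fun l _ => Finset.sum_congr rfl fun i _ => ?_
  by_cases h : j ≠ l ∧ i ≠ j ∧ i ≠ l
  · rw [if_pos h, if_pos ⟨h.1, fun e => h.2.1 e.symm, fun e => h.2.2 e.symm⟩, hsym i j, hsym i l]
    ring
  · rw [if_neg h, if_neg fun hc => h ⟨hc.1, fun e => hc.2.1 e.symm, fun e => hc.2.2 e.symm⟩]

lemma P6 (hG : G.IsSymm) :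
    ∑ i, ∑ j, ∑ k, ∑ l, (if i ≠ j ∧ k ≠ l ∧ i = l ∧ j ≠ k then G i j * G k l * (y j * y k) else 0)
    = y ⬝ᵥ (wd (wd G * (wd G)ᵀ)).mulVec y := by
  have hsym : ∀ a b, G a b = G b a := fun a b => hG.apply b a
  have split : ∀ i j k l : Fin n,
      (if i ≠ j ∧ k ≠ l ∧ i = l ∧ j ≠ k then G i j * G k l * (y j * y k) else 0)
      = (if i = l then (if j ≠ k ∧ i ≠ j ∧ i ≠ k then G i j * G k i * (y j * y k) else 0) else 0) := by
    intro i j k l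
    by_cases h2 : i = l
    · subst h2
      by_cases a : i = j <;> by_cases b : i = k <;> by_cases c : j = k <;>
        simp [a, b, c, eq_comm]
    · simp [h2]
  simp_rw [split, Finset.sum_ite_eq, Finset.mem_univ, if_true]
  rw [quadZ G y, Finset.sum_comm]
  refine Finset.sum_congr rfl fun j _ => ?_
  rw [Finset.sum_comm]
  refine Finset.sum_congr rfl fun k _ => Finset.sum_congr rfl fun i _ => ?_
  by_cases h : j ≠ k ∧ i ≠ j ∧ i ≠ k
  · rw [if_pos h, if_pos ⟨h.1, fun e => h.2.1 e.symm, fun e => h.2.2 e.symm⟩, hsym i j, hsym k i]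
    ring
  · rw [if_neg h, if_neg fun hc => h ⟨hc.1, fun e => hc.2.1 e.symm, fun e => hc.2.2 e.symm⟩]

lemma P7 (hG : G.IsSymm) :
    ∑ i, ∑ j, ∑ k, ∑ l, (if i ≠ j ∧ k ≠ l ∧ j = k ∧ i ≠ l then G i j * G k l * (y i * y l) else 0)
    = y ⬝ᵥ (wd (wd G * (wd G)ᵀ)).mulVec y := by
  have hsym : ∀ a b, G a b = G b a := fun a b => hG.apply b a
  have split : ∀ i j k l : Fin n,
      (if i ≠ j ∧ k ≠ l ∧ j = k ∧ i ≠ l then G i j * G k l * (y i * y l) else 0)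
      = (if j = k then (if i ≠ l ∧ i ≠ j ∧ l ≠ j then G i j * G j l * (y i * y l) else 0) else 0) := by
    intro i j k l
    by_cases h2 : j = k
    · subst h2
      by_cases a : i = j <;> by_cases b : j = l <;> by_cases c : i = l <;>
        simp [a, b, c, eq_comm]
    · simp [h2]
  simp_rw [split, collapse3]
  rw [quadZ G y]
  refine Finset.sum_congr rfl fun i _ => ?_
  rw [Finset.sum_comm]
  refine Finset.sum_congr rfl fun l _ => Finset.sum_congr rfl fun j _ => ?_
  by_cases h : i ≠ l ∧ i ≠ j ∧ l ≠ j
  · rw [if_pos h, if_pos h, hsym j l]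
    ring
  · rw [if_neg h, if_neg h]

lemma P8 (hG : G.IsSymm) :
    ∑ i, ∑ j, ∑ k, ∑ l, (if i ≠ j ∧ k ≠ l ∧ j = l ∧ i ≠ k then G i j * G k l * (y i * y k) else 0)
    = y ⬝ᵥ (wd (wd G * (wd G)ᵀ)).mulVec y := by
  have hsym : ∀ a b, G a b = G b a := fun a b => hG.apply b a
  have split : ∀ i j k l : Fin n,
      (if i ≠ j ∧ k ≠ l ∧ j = l ∧ i ≠ k then G i j * G k l * (y i * y k) else 0)
      = (if j = l then (if i ≠ k ∧ i ≠ j ∧ k ≠ j then G i j * G k j * (y i * y k) else 0) else 0) := by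
    intro i j k l
    by_cases h2 : j = l
    · subst h2
      by_cases a : i = j <;> by_cases b : k = j <;> by_cases c : i = k <;>
        simp [a, b, c, eq_comm]
    · simp [h2]
  simp_rw [split, Finset.sum_ite_eq, Finset.mem_univ, if_true]
  rw [quadZ G y]
  refine Finset.sum_congr rfl fun i _ => ?_
  rw [Finset.sum_comm]
  refine Finset.sum_congr rfl fun k _ => Finset.sum_congr rfl fun j _ => ?_
  by_cases h : i ≠ k ∧ i ≠ j ∧ k ≠ j
  · rw [if_pos h, if_pos h]
    ring
  · rw [if_neg h, if_neg h]

lemma master (i j k l : Fin n) :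
    G i j * G k l *
      (if i = j then (if k = l then 1 else y k * y l)
        else if k = l then y i * y j
        else if (i = k ∧ j = l) ∨ (i = l ∧ j = k) then 1
        else if i = k then y j * y l
        else if i = l then y j * y k
        else if j = k then y i * y l
        else if j = l then y i * y k
        else y i * y j * y k * y l)
    = (if i = j ∧ k = l then G i j * G k l else 0)
      + (if i = j ∧ k ≠ l then G i j * G k l * (y k * y l) else 0)
      + (if i ≠ j ∧ k = l then G i j * G k l * (y i * y j) else 0)
      + (if i ≠ j ∧ k ≠ l ∧ ((i = k ∧ j = l) ∨ (i = l ∧ j = k)) then G i j * G k l else 0)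
      + (if i ≠ j ∧ k ≠ l ∧ i = k ∧ j ≠ l then G i j * G k l * (y j * y l) else 0)
      + (if i ≠ j ∧ k ≠ l ∧ i = l ∧ j ≠ k then G i j * G k l * (y j * y k) else 0)
      + (if i ≠ j ∧ k ≠ l ∧ j = k ∧ i ≠ l then G i j * G k l * (y i * y l) else 0)
      + (if i ≠ j ∧ k ≠ l ∧ j = l ∧ i ≠ k then G i j * G k l * (y i * y k) else 0)
      + (if i ≠ j ∧ i ≠ k ∧ i ≠ l ∧ j ≠ k ∧ j ≠ l ∧ k ≠ l then
          y i * y j * y k * y l * G i j * G k l else 0) := by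
  by_cases h1 : i = j <;> by_cases h2 : k = l <;> by_cases h3 : i = k <;>
    by_cases h4 : i = l <;> by_cases h5 : j = k <;> by_cases h6 : j = l <;>
    simp_all <;> ring

end Aux

/-- for symmetric `G`, with `Z = G_wd G_wd^T`,
`E_y[(x^T G x)^2] = Tr(G)^2 + 2 Tr(G)(y^T G_wd y) + 2 Tr(Z) + 4 y^T Z_wd y
  + Σ_{(i,j,k,l) pairwise distinct} y_i y_j y_k y_l G_{ij} G_{kl}`. -/
theorem second_moment_quadratic_form (n : ℕ) (hn : 1 ≤ n)
    (G : Matrix (Fin n) (Fin n) ℝ) (hG : G.IsSymm)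
    (y : Fin n → ℝ) (hy : ∀ i, y i ∈ Set.Icc (-1 : ℝ) 1) :
    berE n y (fun x => (x ⬝ᵥ G.mulVec x) ^ 2)
      = G.trace ^ 2 + 2 * G.trace * (y ⬝ᵥ (wd G).mulVec y)
        + 2 * (wd G * (wd G)ᵀ).trace + 4 * (y ⬝ᵥ (wd (wd G * (wd G)ᵀ)).mulVec y)
        + ∑ i, ∑ j, ∑ k, ∑ l,
            (if i ≠ j ∧ i ≠ k ∧ i ≠ l ∧ j ≠ k ∧ j ≠ l ∧ k ≠ l then
              y i * y j * y k * y l * G i j * G k l else 0) := by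
  rw [berE_expand n y G]
  simp_rw [berE_four n y]
  simp_rw [master G y]
  simp_rw [Finset.sum_add_distrib]
  rw [P1 G, P2 G y, P3 G y, P4 G hG, P5 G y hG, P6 G y hG, P7 G y hG, P8 G y hG]
  ring
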